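/- arXiv:1310.7696 — 3 statements merged into one kernel-verified Lean document; each statement's English description precedes it below -/
import Mathlib

section
/- If P' is a ρ-perturbation of a finite point set P ⊂ ℝ^m, then every point on the boundary of conv(P) is within distance ρ of the boundary of conv(P'). -/
open Metric Set

/-- A preconnected set meeting a set `t` but not contained in `t` meets the frontier of `t`. -/
lemma aux_inter_frontier_nonempty {E : Type*} [TopologicalSpace E] {s t : Set E}
    (hs : IsPreconnected s) (h1 : (s ∩ t).Nonempty) (h2 : ¬ s ⊆ t) :
    (s ∩ frontier t).Nonempty := by
  by_contra h
  rw [Set.not_nonempty_iff_eq_empty] at h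
  have hsub : s ⊆ interior t ∪ (closure t)ᶜ := by
    intro x hx
    by_cases hxc : x ∈ closure t
    · rcases (closure_eq_interior_union_frontier t ▸ hxc) with h' | h'
      · exact Or.inl h'
      · exact absurd (Set.mem_inter hx h') (by simp [h])
    · exact Or.inr hxc
  have hdisj : Disjoint (interior t) (closure t)ᶜ :=
    Set.disjoint_compl_right_iff_subset.mpr (interior_subset.trans subset_closure)
  have hne : (s ∩ interior t).Nonempty := by
    obtain ⟨a, has, hat⟩ := h1
    rcases hsub has with h' | h'
    · exact ⟨a, has, h'⟩
    · exact absurd (subset_closure hat) h'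
  have hsi := hs.subset_left_of_subset_union isOpen_interior isClosed_closure.isOpen_compl
      hdisj hsub hne
  exact h2 (hsi.trans interior_subset)

lemma aux_infDist_le_of_mem_cthickening {E : Type*} [PseudoMetricSpace E] {x : E} {s : Set E}
    {ρ : ℝ} (hρ : 0 ≤ ρ) (h : x ∈ Metric.cthickening ρ s) : Metric.infDist x s ≤ ρ := by
  rw [Metric.mem_cthickening_iff] at h
  exact ENNReal.toReal_le_of_le_ofReal hρ h

/-- If `P'` is a `ρ`-perturbation of a finite point set `P ⊂ ℝ^m`, then every point on the
boundary of `conv P` is within distance `ρ` of the boundary of `conv P'`. -/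
theorem frontier_conv_hull_perturbation_dist {m : ℕ} (P : Finset (EuclideanSpace ℝ (Fin m)))
    (f : EuclideanSpace ℝ (Fin m) → EuclideanSpace ℝ (Fin m)) (ρ : ℝ)
    (hf : ∀ p ∈ P, ‖f p - p‖ ≤ ρ) :
    ∀ y ∈ frontier (convexHull ℝ (P : Set (EuclideanSpace ℝ (Fin m)))),
      Metric.infDist y (frontier (convexHull ℝ (f '' (P : Set (EuclideanSpace ℝ (Fin m)))))) ≤ ρ := by
  intro y hy
  set C : Set (EuclideanSpace ℝ (Fin m)) :=
    convexHull ℝ (P : Set (EuclideanSpace ℝ (Fin m))) with hC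
  set K : Set (EuclideanSpace ℝ (Fin m)) :=
    convexHull ℝ (f '' (P : Set (EuclideanSpace ℝ (Fin m)))) with hK
  -- P is nonempty
  rcases P.eq_empty_or_nonempty with rfl | ⟨p₀, hp₀⟩
  · simp [hC] at hy
  have hρ : 0 ≤ ρ := le_trans (norm_nonneg _) (hf p₀ hp₀)
  -- compactness and closedness
  have hCcomp : IsCompact C := P.finite_toSet.isCompact_convexHull ℝ
  have hKcomp : IsCompact K := (P.finite_toSet.image f).isCompact_convexHull ℝ
  have hCclosed : IsClosed C := hCcomp.isClosed
  have hKclosed : IsClosed K := hKcomp.isClosed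
  have hCne : C.Nonempty := ⟨p₀, subset_convexHull ℝ _ hp₀⟩
  have hKne : K.Nonempty := ⟨f p₀, subset_convexHull ℝ _ ⟨p₀, hp₀, rfl⟩⟩
  have hyC : y ∈ C := hCclosed.closure_eq ▸ frontier_subset_closure hy
  have hyni : y ∉ interior C := fun h => hy.2 h
  -- mutual cthickening inclusions
  have hCK : C ⊆ Metric.cthickening ρ K := by
    refine convexHull_min (fun p hp => ?_) ((convex_convexHull ℝ _).cthickening ρ)
    refine Metric.mem_cthickening_of_dist_le p (f p) ρ _ (subset_convexHull ℝ _ ⟨p, hp, rfl⟩) ?_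
    rw [dist_eq_norm, ← norm_neg, neg_sub]
    exact hf p hp
  have hKC : K ⊆ Metric.cthickening ρ C := by
    refine convexHull_min (fun q hq => ?_) ((convex_convexHull ℝ _).cthickening ρ)
    obtain ⟨p, hp, rfl⟩ := hq
    refine Metric.mem_cthickening_of_dist_le (f p) p ρ _ (subset_convexHull ℝ _ hp) ?_
    rw [dist_eq_norm]
    exact hf p hp
  by_cases hyK : y ∈ K
  · -- y inside K: show the frontier of K is within ρ
    by_contra hcon
    push_neg at hcon
    set d := Metric.infDist y (frontier K) with hd
    obtain ⟨δ, hδ1, hδ2⟩ : ∃ δ, ρ < δ ∧ δ < d := ⟨(ρ + d) / 2, by linarith, by linarith⟩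
    have hδ0 : 0 ≤ δ := le_of_lt (lt_of_le_of_lt hρ hδ1)
    -- closedBall y δ ⊆ K
    have hball : Metric.closedBall y δ ⊆ K := by
      intro x hx
      by_contra hxK
      have hseg : segment ℝ y x ⊆ Metric.closedBall y δ :=
        (convex_closedBall y δ).segment_subset (Metric.mem_closedBall_self hδ0) hx
      obtain ⟨w, hws, hwf⟩ := aux_inter_frontier_nonempty
        ((convex_segment y x).isPreconnected) ⟨y, left_mem_segment ℝ y x, hyK⟩
        (fun h => hxK (h (right_mem_segment ℝ y x)))
      have : d ≤ dist y w := Metric.infDist_le_dist_of_mem hwf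
      have : dist y w ≤ δ := by simpa [dist_comm] using hseg hws
      linarith
    -- now show closedBall y (δ - ρ) ⊆ C, contradicting y ∉ interior C
    have hball2 : Metric.closedBall y (δ - ρ) ⊆ C := by
      intro x hx
      by_contra hxC
      obtain ⟨φ, u, hu1, hu2⟩ :=
        geometric_hahn_banach_closed_point (convex_convexHull ℝ _) hCclosed hxC
      set w : EuclideanSpace ℝ (Fin m) := (InnerProductSpace.toDual ℝ (EuclideanSpace ℝ (Fin m))).symm φ with hw
      have hφw : ∀ z : EuclideanSpace ℝ (Fin m), φ z = inner ℝ w z := fun z =>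
        (InnerProductSpace.toDual_symm_apply (𝕜 := ℝ)).symm
      have hnw : ‖w‖ = ‖φ‖ := LinearIsometryEquiv.norm_map _ _
      have hφne : φ ≠ 0 := by
        intro h0
        obtain ⟨c, hc⟩ := hCne
        have := hu1 c hc
        rw [h0] at this hu2
        simp at this hu2
        linarith
      have hw0 : 0 < ‖w‖ := by
        rw [hnw]; exact norm_pos_iff.mpr hφne
      set z : EuclideanSpace ℝ (Fin m) := y + (δ / ‖w‖) • w with hz
      have hzball : z ∈ Metric.closedBall y δ := by
        rw [Metric.mem_closedBall, dist_eq_norm]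
        simp only [hz, add_sub_cancel_left]
        rw [norm_smul, norm_div, Real.norm_eq_abs, abs_of_nonneg hδ0]
        rw [Real.norm_eq_abs, abs_of_pos hw0]
        field_simp
        exact le_rfl
      have hzK : z ∈ K := hball hzball
      have hzCth : Metric.infDist z C ≤ ρ := aux_infDist_le_of_mem_cthickening hρ (hKC hzK)
      obtain ⟨c, hcC, hcd⟩ := hCcomp.exists_infDist_eq_dist hCne z
      have hdzc : dist z c ≤ ρ := hcd ▸ hzCth
      -- φ z = φ y + δ * ‖w‖
      have hφz : φ z = φ y + δ * ‖w‖ := by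
        rw [hφw z, hφw y, hz, inner_add_right, inner_smul_right, real_inner_self_eq_norm_sq]
        field_simp
      have h1 : φ z - φ c ≤ ‖w‖ * ρ := by
        have := φ.le_opNorm (z - c)
        rw [map_sub] at this
        calc φ z - φ c ≤ ‖φ‖ * ‖z - c‖ := le_trans (le_abs_self _) (by simpa [Real.norm_eq_abs] using this)
          _ ≤ ‖w‖ * ρ := by
              rw [hnw]
              exact mul_le_mul_of_nonneg_left (by rwa [← dist_eq_norm]) (norm_nonneg _)
      have h2 : φ x - φ y ≤ ‖w‖ * (δ - ρ) := by
        have := φ.le_opNorm (x - y)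
        rw [map_sub] at this
        calc φ x - φ y ≤ ‖φ‖ * ‖x - y‖ := le_trans (le_abs_self _) (by simpa [Real.norm_eq_abs] using this)
          _ ≤ ‖w‖ * (δ - ρ) := by
              rw [hnw]
              exact mul_le_mul_of_nonneg_left (by rwa [← dist_eq_norm, ← Metric.mem_closedBall] ) (norm_nonneg _)
      have h3 : φ c < u := hu1 c hcC
      nlinarith [hu2]
    have : y ∈ interior C := by
      rw [mem_interior_iff_mem_nhds]
      exact Filter.mem_of_superset (Metric.closedBall_mem_nhds y (by linarith)) hball2
    exact hyni this
  · -- y outside K: nearest point argument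
    have hinf : Metric.infDist y K ≤ ρ := aux_infDist_le_of_mem_cthickening hρ (hCK hyC)
    obtain ⟨z, hzK, hzd⟩ := hKcomp.exists_infDist_eq_dist hKne y
    obtain ⟨w, hws, hwf⟩ := aux_inter_frontier_nonempty
      ((convex_segment y z).isPreconnected) ⟨z, right_mem_segment ℝ y z, hzK⟩
      (fun h => hyK (h (left_mem_segment ℝ y z)))
    have hdw : dist y w ≤ dist y z := by
      have := dist_add_dist_of_mem_segment hws
      have h0 := dist_nonneg (x := w) (y := z)
      linarith
    calc Metric.infDist y (frontier K) ≤ dist y w := Metric.infDist_le_dist_of_mem hwf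
      _ ≤ dist y z := hdw
      _ ≤ ρ := by rw [← hzd]; exact hinf
end

section
/- For any simplex σ in ℝ^m of dimension j ≥ 2 and any two distinct vertices p, q of σ with nondegenerate facets, the ratio of altitudes satisfies D(p,σ)/D(p,σ_q) = D(q,σ)/D(q,σ_p), where σ_p and σ_q are the facets of σ opposite p and q respectively, and D(x,τ) denotes the distance from x to the affine hull of the face of τ opposite x. -/
open Metric
open scoped Classical

/-- The altitude of a vertex `x` in the simplex with vertex set `s`: the distance from `x`
to the affine hull of the opposite face. -/
noncomputable def altitude {m : ℕ} (x : EuclideanSpace ℝ (Fin m))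
    (s : Finset (EuclideanSpace ℝ (Fin m))) : ℝ :=
  Metric.infDist x (affineSpan ℝ ((s.erase x : Finset (EuclideanSpace ℝ (Fin m))) :
    Set (EuclideanSpace ℝ (Fin m))) : Set (EuclideanSpace ℝ (Fin m)))

open scoped RealInnerProductSpace

/-- If `c ∈ s` and `p - c` is orthogonal to the direction of `s`, then the distance
from `p` to `s` is `dist p c`. -/
lemma infDist_eq_of_perp {m : ℕ} (s : AffineSubspace ℝ (EuclideanSpace ℝ (Fin m)))
    (p c : EuclideanSpace ℝ (Fin m)) (hc : c ∈ s)
    (hperp : ∀ w ∈ s.direction, ⟪p - c, w⟫ = 0) :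
    Metric.infDist p (s : Set (EuclideanSpace ℝ (Fin m))) = dist p c := by
  refine le_antisymm (Metric.infDist_le_dist_of_mem hc) ?_
  by_contra h
  push_neg at h
  obtain ⟨y, hy, hlt⟩ := (Metric.infDist_lt_iff ⟨c, hc⟩).1 h
  have hdir : y - c ∈ s.direction := by
    have := AffineSubspace.vsub_mem_direction hy hc
    rwa [vsub_eq_sub] at this
  have hz := hperp _ hdir
  have hexp : ‖p - y‖ ^ 2 = ‖p - c‖ ^ 2 + ‖y - c‖ ^ 2 := by
    have : p - y = (p - c) - (y - c) := by abel
    rw [this, norm_sub_sq_real, hz]; ring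
  have h1 : dist p y = ‖p - y‖ := dist_eq_norm _ _
  have h2 : dist p c = ‖p - c‖ := dist_eq_norm _ _
  rw [h1, h2] at hlt
  nlinarith [norm_nonneg (p - y), norm_nonneg (p - c), norm_nonneg (y - c)]

/-- Equality between ratios of altitudes given by the dihedral angle: for a `j`-simplex `σ`
with `j ≥ 2` and distinct vertices `p, q` with nondegenerate opposite facets,
`D(p,σ)/D(p,σ_q) = D(q,σ)/D(q,σ_p)`. -/
theorem altitude_ratio {m : ℕ} (σ : Finset (EuclideanSpace ℝ (Fin m)))
    (p q : EuclideanSpace ℝ (Fin m)) (hp : p ∈ σ) (hq : q ∈ σ) (hpq : p ≠ q)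
    (hdim : 3 ≤ σ.card)
    (h1 : 0 < altitude p (σ.erase q)) (h2 : 0 < altitude q (σ.erase p)) :
    altitude p σ * altitude q (σ.erase p) = altitude q σ * altitude p (σ.erase q) := by
  classical
  set t : Finset (EuclideanSpace ℝ (Fin m)) := (σ.erase p).erase q with htdef
  have htq : (σ.erase q).erase p = t := Finset.erase_right_comm
  -- t is nonempty
  have hqp : q ∈ σ.erase p := Finset.mem_erase.2 ⟨hpq.symm, hq⟩
  have hpqe : p ∈ σ.erase q := Finset.mem_erase.2 ⟨hpq, hp⟩
  have htne : t.Nonempty := by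
    rw [← Finset.card_pos, htdef, Finset.card_erase_of_mem hqp,
      Finset.card_erase_of_mem hp]
    omega
  set A : AffineSubspace ℝ (EuclideanSpace ℝ (Fin m)) := affineSpan ℝ (t : Set (EuclideanSpace ℝ (Fin m))) with hAdef
  obtain ⟨a0, ha0⟩ := htne
  haveI : Nonempty A := ⟨⟨a0, subset_affineSpan ℝ _ (Finset.mem_coe.2 ha0)⟩⟩
  set K := A.direction with hKdef
  set Pp : EuclideanSpace ℝ (Fin m) := (EuclideanGeometry.orthogonalProjection A p : EuclideanSpace ℝ (Fin m)) with hPp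
  set Pq : EuclideanSpace ℝ (Fin m) := (EuclideanGeometry.orthogonalProjection A q : EuclideanSpace ℝ (Fin m)) with hPq
  have hPpA : Pp ∈ A := by rw [hPp]; exact (EuclideanGeometry.orthogonalProjection A p).2
  have hPqA : Pq ∈ A := by rw [hPq]; exact (EuclideanGeometry.orthogonalProjection A q).2
  set u : EuclideanSpace ℝ (Fin m) := p - Pp with hu
  set v : EuclideanSpace ℝ (Fin m) := q - Pq with hv
  have huK : u ∈ Kᗮ := by
    rw [hu, hPp, hKdef]
    have := EuclideanGeometry.vsub_orthogonalProjection_mem_direction_orthogonal A p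
    rwa [vsub_eq_sub] at this
  have hvK : v ∈ Kᗮ := by
    rw [hv, hPq, hKdef]
    have := EuclideanGeometry.vsub_orthogonalProjection_mem_direction_orthogonal A q
    rwa [vsub_eq_sub] at this
  -- altitudes to the common face
  have haltp : altitude p (σ.erase q) = ‖u‖ := by
    rw [altitude, htq, ← hAdef, infDist_eq_of_perp A p Pp hPpA, dist_eq_norm]
    intro w hw
    have := huK w hw
    rwa [real_inner_comm] at this
  have haltq : altitude q (σ.erase p) = ‖v‖ := by
    rw [altitude, ← htdef, ← hAdef, infDist_eq_of_perp A q Pq hPqA, dist_eq_norm]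
    intro w hw
    have := hvK w hw
    rwa [real_inner_comm] at this
  have hun : ‖u‖ ≠ 0 := by rw [haltp] at h1; exact ne_of_gt h1
  have hvn : ‖v‖ ≠ 0 := by rw [haltq] at h2; exact ne_of_gt h2
  set r : ℝ := ⟪u, v⟫ / (‖v‖ ^ 2) with hr
  set r' : ℝ := ⟪u, v⟫ / (‖u‖ ^ 2) with hr'
  -- key orthogonality computation, symmetric in the two vertices
  have main : ∀ (x y w w' : EuclideanSpace ℝ (Fin m)) (s : ℝ), x ∈ σ → y ∈ σ → x ≠ y →
      (σ.erase y).erase x = t →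
      w = x - (EuclideanGeometry.orthogonalProjection A x : EuclideanSpace ℝ (Fin m)) →
      w' = y - (EuclideanGeometry.orthogonalProjection A y : EuclideanSpace ℝ (Fin m)) →
      s = ⟪w, w'⟫ / (‖w'‖ ^ 2) → ‖w'‖ ≠ 0 →
      altitude x σ = ‖w - s • w'‖ := by
    intro x y w w' s hx hy hxy hts hw hw' hs hw'n
    set Px : EuclideanSpace ℝ (Fin m) := (EuclideanGeometry.orthogonalProjection A x : EuclideanSpace ℝ (Fin m)) with hPx
    set Py : EuclideanSpace ℝ (Fin m) := (EuclideanGeometry.orthogonalProjection A y : EuclideanSpace ℝ (Fin m)) with hPy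
    have hPxA : Px ∈ A := by rw [hPx]; exact (EuclideanGeometry.orthogonalProjection A x).2
    have hPyA : Py ∈ A := by rw [hPy]; exact (EuclideanGeometry.orthogonalProjection A y).2
    have hwK : w ∈ Kᗮ := by
      rw [hw, hPx, hKdef]
      have := EuclideanGeometry.vsub_orthogonalProjection_mem_direction_orthogonal A x
      rwa [vsub_eq_sub] at this
    have hw'K : w' ∈ Kᗮ := by
      rw [hw', hPy, hKdef]
      have := EuclideanGeometry.vsub_orthogonalProjection_mem_direction_orthogonal A y
      rwa [vsub_eq_sub] at this
    set Ex : AffineSubspace ℝ (EuclideanSpace ℝ (Fin m)) := affineSpan ℝ ((σ.erase x : Finset (EuclideanSpace ℝ (Fin m))) : Set (EuclideanSpace ℝ (Fin m))) with hEx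
    have hAleEx : A ≤ Ex := by
      apply affineSpan_mono
      intro z hz
      rw [Finset.mem_coe] at hz ⊢
      rw [← hts, Finset.erase_right_comm] at hz
      exact Finset.mem_of_mem_erase hz
    have hyEx : y ∈ Ex := subset_affineSpan ℝ _
      (Finset.mem_coe.2 (Finset.mem_erase.2 ⟨hxy.symm, hy⟩))
    -- the foot of the altitude from x
    set c : EuclideanSpace ℝ (Fin m) := s • (y -ᵥ Py) +ᵥ Px with hc
    have hcEx : c ∈ Ex := Ex.smul_vsub_vadd_mem s hyEx (hAleEx hPyA) (hAleEx hPxA)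
    have hxc : x - c = w - s • w' := by
      rw [hc, hw, hw']
      simp only [vsub_eq_sub, vadd_eq_add, smul_sub]
      abel
    have hperp : ∀ z ∈ Ex.direction, ⟪x - c, z⟫ = 0 := by
      have hyset : y ∈ ((σ.erase x : Finset (EuclideanSpace ℝ (Fin m))) : Set (EuclideanSpace ℝ (Fin m))) :=
        Finset.mem_coe.2 (Finset.mem_erase.2 ⟨hxy.symm, hy⟩)
      intro z hz
      rw [hEx, direction_affineSpan, vectorSpan_eq_span_vsub_set_right ℝ hyset] at hz
      rw [hxc]
      have : z ∈ (ℝ ∙ (w - s • w'))ᗮ := by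
        revert hz
        refine fun hz => Submodule.span_le.2 ?_ hz
        rintro _ ⟨b, hb, rfl⟩
        rw [SetLike.mem_coe, Submodule.mem_orthogonal_singleton_iff_inner_left]
        rcases eq_or_ne b y with rfl | hby
        · simp
        · -- b ∈ t, so b ∈ A
          have hbt : b ∈ t := by
            rw [← hts]
            have hb' := Finset.mem_coe.1 hb
            rw [Finset.mem_erase] at hb'
            exact Finset.mem_erase.2 ⟨hb'.1, Finset.mem_erase.2 ⟨hby, hb'.2⟩⟩
          have hbA : b ∈ A := subset_affineSpan ℝ _ (Finset.mem_coe.2 hbt)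
          have hbPy : b - Py ∈ K := by
            have := AffineSubspace.vsub_mem_direction hbA hPyA
            rwa [vsub_eq_sub] at this
          have hsplit : b - y = (b - Py) - w' := by
            rw [hw']; abel
          simp only [vsub_eq_sub]
          rw [hsplit]
          simp only [inner_sub_left, inner_sub_right, real_inner_smul_right]
          have e1 : ⟪b, w⟫ - ⟪Py, w⟫ = 0 := by
            rw [← inner_sub_left]; exact hwK _ hbPy
          have e2 : ⟪b, w'⟫ - ⟪Py, w'⟫ = 0 := by
            rw [← inner_sub_left]; exact hw'K _ hbPy
          have e3 : ⟪w', w'⟫ = ‖w'‖ ^ 2 := real_inner_self_eq_norm_sq w'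
          have e4 : ⟪w', w⟫ = ⟪w, w'⟫ := real_inner_comm _ _
          have e5 : s * ‖w'‖ ^ 2 = ⟪w, w'⟫ := by
            rw [hs]; field_simp
          linear_combination e1 - s * e2 - e4 + s * e3 + e5
      rw [Submodule.mem_orthogonal_singleton_iff_inner_left] at this
      rw [real_inner_comm]
      exact this
    rw [altitude, ← hEx, infDist_eq_of_perp Ex x c hcEx hperp, dist_eq_norm, hxc]
  have hA1 : altitude p σ = ‖u - r • v‖ :=
    main p q u v r hp hq hpq htq hu hv hr hvn
  have hA2 : altitude q σ = ‖v - r' • u‖ := by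
    refine main q p v u r' hq hp hpq.symm htdef.symm ?_ ?_ ?_ hun
    · exact hv
    · exact hu
    · rw [hr', real_inner_comm]
  rw [hA1, hA2, haltp, haltq]
  -- final algebraic identity
  have hvpos : (0:ℝ) < ‖v‖ := lt_of_le_of_ne (norm_nonneg _) (Ne.symm hvn)
  have hupos : (0:ℝ) < ‖u‖ := lt_of_le_of_ne (norm_nonneg _) (Ne.symm hun)
  have hL : (‖u - r • v‖ * ‖v‖) ^ 2 = ‖u‖ ^ 2 * ‖v‖ ^ 2 - ⟪u, v⟫ ^ 2 := by
    rw [mul_pow, norm_sub_sq_real, inner_smul_right, norm_smul, hr]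
    rw [Real.norm_eq_abs]
    rw [mul_pow, sq_abs]
    field_simp
    ring
  have hR : (‖v - r' • u‖ * ‖u‖) ^ 2 = ‖u‖ ^ 2 * ‖v‖ ^ 2 - ⟪u, v⟫ ^ 2 := by
    rw [mul_pow, norm_sub_sq_real, inner_smul_right, norm_smul, hr']
    rw [Real.norm_eq_abs]
    rw [mul_pow, sq_abs]
    have : ⟪v, u⟫ = ⟪u, v⟫ := real_inner_comm _ _
    rw [this]
    field_simp
    ring
  have hLnn : 0 ≤ ‖u - r • v‖ * ‖v‖ := mul_nonneg (norm_nonneg _) (norm_nonneg _)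
  have hRnn : 0 ≤ ‖v - r' • u‖ * ‖u‖ := mul_nonneg (norm_nonneg _) (norm_nonneg _)
  calc ‖u - r • v‖ * ‖v‖ = Real.sqrt ((‖u - r • v‖ * ‖v‖) ^ 2) :=
        (Real.sqrt_sq hLnn).symm
    _ = Real.sqrt ((‖v - r' • u‖ * ‖u‖) ^ 2) := by rw [hL, hR]
    _ = ‖v - r' • u‖ * ‖u‖ := Real.sqrt_sq hRnn
end

section
/- Let S be a sphere of radius R centered at c in ℝ^m, let p ∈ ℝ^m, and let ρ < R - β with β ≥ 0. Then the volume of the set of points in the open ball B(p,ρ) whose distance to S is at most β is at most V_{m-1}·(πρ/2)^{m-1}·2β, where V_{m-1} is the volume of the (m-1)-dimensional unit ball. -/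
open Metric MeasureTheory Real

open Set
open scoped ENNReal

lemma lintegral_fun_norm_addHaar' {E : Type*} [NormedAddCommGroup E] [NormedSpace ℝ E]
    [MeasurableSpace E] [BorelSpace E] [FiniteDimensional ℝ E] [Nontrivial E]
    (μ : Measure E) [μ.IsAddHaarMeasure] (f : ℝ → ℝ≥0∞) (hf : Measurable f) :
    ∫⁻ x, f ‖x‖ ∂μ = (Module.finrank ℝ E) * μ (ball 0 1) *
      ∫⁻ y in Set.Ioi (0:ℝ), ENNReal.ofReal (y ^ (Module.finrank ℝ E - 1)) * f y := by
  calc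
    ∫⁻ x, f ‖x‖ ∂μ = ∫⁻ x : ({(0:E)}ᶜ : Set E), f ‖x.1‖ ∂(μ.comap (↑)) := by
      rw [lintegral_subtype_comap (measurableSet_singleton _).compl fun x => f ‖x‖,
        MeasureTheory.restrict_compl_singleton]
    _ = ∫⁻ x : sphere (0 : E) 1 × Ioi (0 : ℝ), f x.2
        ∂μ.toSphere.prod (.volumeIoiPow (Module.finrank ℝ E - 1)) := by
      rw [← μ.measurePreserving_homeomorphUnitSphereProd.lintegral_comp
        (f := fun x : sphere (0:E) 1 × Ioi (0:ℝ) => f x.2)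
        (by exact hf.comp (measurable_subtype_coe.comp measurable_snd))]
      simp [homeomorphUnitSphereProd, homeomorphSphereProd]
    _ = μ.toSphere univ * ∫⁻ x : Ioi (0:ℝ), f x ∂(Measure.volumeIoiPow (Module.finrank ℝ E - 1)) := by
      rw [MeasureTheory.lintegral_prod _ (by
        exact (hf.comp (measurable_subtype_coe.comp measurable_snd)).aemeasurable)]
      simp [lintegral_const, mul_comm]
    _ = (Module.finrank ℝ E) * μ (ball 0 1) *
        ∫⁻ y in Set.Ioi (0:ℝ), ENNReal.ofReal (y ^ (Module.finrank ℝ E - 1)) * f y := by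
      rw [μ.toSphere_apply_univ, Measure.volumeIoiPow,
        lintegral_withDensity_eq_lintegral_mul _ (by fun_prop) (by
          exact hf.comp measurable_subtype_coe),
        ]
      rw [show ((fun r : Ioi (0:ℝ) => ENNReal.ofReal (r.1 ^ (Module.finrank ℝ E - 1))) * fun x : Ioi (0:ℝ) => f x.1)
          = fun x : Ioi (0:ℝ) => (fun y : ℝ => ENNReal.ofReal (y ^ (Module.finrank ℝ E - 1)) * f y) x.1 from rfl,
        lintegral_subtype_comap measurableSet_Ioi]

lemma slice_bound {r β ρ q : ℝ} (hβ : 0 ≤ β) (hρ : 0 < ρ) (hr : ρ < r) (hq0 : 0 ≤ q)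
    (hq : q < ρ^2) :
    Real.sqrt ((r + 2*β)^2 - q) - Real.sqrt (r^2 - q) ≤ 2*β*ρ / Real.sqrt (ρ^2 - q) := by
  have hw : (0:ℝ) < Real.sqrt (ρ^2 - q) := Real.sqrt_pos.2 (by linarith)
  set w := Real.sqrt (ρ^2 - q) with hwdef
  set a := Real.sqrt (r^2 - q) with hadef
  set b := Real.sqrt ((r + 2*β)^2 - q) with hbdef
  have hρr : ρ^2 < r^2 := by nlinarith
  have hw2 : w^2 = ρ^2 - q := Real.sq_sqrt (by linarith)
  have ha2 : a^2 = r^2 - q := Real.sq_sqrt (by nlinarith)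
  have hb2 : b^2 = (r + 2*β)^2 - q := Real.sq_sqrt (by nlinarith)
  have ha0 : 0 ≤ a := Real.sqrt_nonneg _
  have hb0 : 0 ≤ b := Real.sqrt_nonneg _
  have hwρ : w ≤ ρ := by
    have h := Real.sqrt_le_sqrt (show ρ^2 - q ≤ ρ^2 by linarith)
    rwa [Real.sqrt_sq hρ.le] at h
  -- key: a*ρ ≥ r*w
  have key : r * w ≤ a * ρ := by
    nlinarith [sq_nonneg (a*ρ - r*w), sq_nonneg (a*ρ + r*w), mul_nonneg ha0 hρ.le,
      mul_nonneg (mul_nonneg ha0 hρ.le) (mul_nonneg (le_of_lt (lt_trans hρ hr)) hw.le)]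
  have h1 : r*(w*w) ≤ a*ρ*w := by nlinarith [mul_le_mul_of_nonneg_right key hw.le]
  have key2 : (b*w)^2 ≤ (a*w + 2*β*ρ)^2 := by
    nlinarith [mul_le_mul_of_nonneg_left h1 hβ, mul_nonneg (mul_nonneg hβ hβ) hq0]
  have key3 : b*w ≤ a*w + 2*β*ρ := by
    nlinarith [mul_nonneg hb0 hw.le, mul_nonneg ha0 hw.le, mul_nonneg (mul_nonneg (by norm_num : (0:ℝ) ≤ 2) hβ) hρ.le]
  rw [sub_le_iff_le_add, div_add' _ _ _ hw.ne', le_div_iff₀ hw]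
  nlinarith

lemma aux1d (k : ℕ) (hk : 0 < k) {ρ : ℝ} (hρ : 0 < ρ) :
    ∫⁻ u in Set.Ioi (0:ℝ), ENNReal.ofReal (u ^ (k-1)) *
      (if u < ρ then ENNReal.ofReal (ρ / Real.sqrt (ρ^2 - u^2)) else 0)
      ≤ ENNReal.ofReal ((π/2*ρ)^k / k) := by
  set F : ℝ → ℝ≥0∞ := fun u => ENNReal.ofReal (u ^ (k-1)) *
      (if u < ρ then ENNReal.ofReal (ρ / Real.sqrt (ρ^2 - u^2)) else 0) with hF
  have hFmeas : Measurable F := by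
    apply Measurable.mul
    · exact (measurable_id.pow_const _).ennreal_ofReal
    · exact Measurable.ite (measurableSet_lt measurable_id measurable_const)
        (Measurable.ennreal_ofReal (measurable_const.div (by fun_prop))) measurable_const
  set xs : ℕ → ℝ := fun n => ρ - ρ/(n+2) with hxs
  have hxsρ : ∀ n, xs n < ρ := fun n => sub_lt_self _ (by positivity)
  have hxs0 : ∀ n, 0 < xs n := by
    intro n
    have hn1 : (1:ℝ) < (n:ℝ)+2 := by have := Nat.cast_nonneg (α := ℝ) n; linarith
    have h2 : ρ/((n:ℝ)+2) < ρ := div_lt_self hρ hn1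
    simp only [hxs]; linarith
  have hxsmono : Monotone xs := by
    intro n m hnm
    have : ρ/((m:ℝ)+2) ≤ ρ/((n:ℝ)+2) := by
      apply div_le_div_of_nonneg_left hρ.le (by positivity)
      exact_mod_cast by omega
    simp only [hxs]; linarith
  set Fn : ℕ → ℝ → ℝ≥0∞ := fun n u => if u ≤ xs n then F u else 0 with hFn
  have hFnmeas : ∀ n, Measurable (Fn n) :=
    fun n => Measurable.ite (measurableSet_le measurable_id measurable_const) hFmeas
      measurable_const
  have hFnmono : Monotone Fn := by
    intro n m hnm u
    simp only [hFn]
    by_cases h : u ≤ xs n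
    · rw [if_pos h, if_pos (h.trans (hxsmono hnm))]
    · rw [if_neg h]; exact zero_le
  have key : ∀ u, ⨆ n, Fn n u = F u := by
    intro u
    rcases lt_or_ge u ρ with hu | hu
    · obtain ⟨N, hN⟩ := exists_nat_ge (ρ/(ρ-u))
      have hu2 : ρ/(ρ-u) ≤ (N:ℝ)+2 := hN.trans (by linarith)
      have hu3 : ρ ≤ ((N:ℝ)+2)*(ρ-u) := (div_le_iff₀ (by linarith)).1 hu2
      have hu4 : u ≤ xs N := by
        have h5 : ρ/((N:ℝ)+2) ≤ ρ - u := by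
          rw [div_le_iff₀ (by positivity)]
          nlinarith [hu3]
        simp only [hxs]; linarith
      apply le_antisymm
      · exact iSup_le fun n => by simp only [hFn]; split <;> simp
      · exact le_iSup_of_le N (by rw [hFn]; simp only [if_pos hu4]; exact le_rfl)
    · have hF0 : F u = 0 := by
        rw [hF]; simp only [if_neg (not_lt.2 hu), mul_zero]
      simp only [hF0]
      apply le_antisymm _ zero_le
      exact iSup_le fun n => by simp only [hFn]; split <;> simp [hF0]
  have bound_n : ∀ n, ∫⁻ u in Set.Ioi (0:ℝ), Fn n u ≤ ENNReal.ofReal ((π/2*ρ)^k / k) := by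
    intro n
    have hx0 : 0 < xs n := hxs0 n
    have hxρ : xs n < ρ := hxsρ n
    set x := xs n with hxdef
    set g : ℝ → ℝ := fun u => u^(k-1) * (ρ / Real.sqrt (ρ^2 - u^2)) with hg
    set D : ℝ → ℝ := fun u => (ρ * Real.arcsin (u/ρ))^(k-1) * (ρ / Real.sqrt (ρ^2 - u^2)) with hD
    have hcont_sqrt : ∀ u ∈ Set.Icc (0:ℝ) x, Real.sqrt (ρ^2 - u^2) ≠ 0 := by
      intro u hu
      have h1 : 0 < ρ^2 - u^2 := by nlinarith [hu.1, hu.2]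
      positivity
    have hgcont : ContinuousOn g (Set.Icc 0 x) := by
      apply ContinuousOn.mul (by fun_prop)
      exact continuousOn_const.div (by fun_prop) hcont_sqrt
    have hDcont : ContinuousOn D (Set.Icc 0 x) := by
      apply ContinuousOn.mul
      · exact ((continuous_const.mul (Real.continuous_arcsin.comp
          (continuous_id.div_const ρ))).pow _).continuousOn
      · exact continuousOn_const.div (by fun_prop) hcont_sqrt
    have hgint : IntegrableOn g (Set.Ioc 0 x) :=
      (hgcont.integrableOn_compact isCompact_Icc).mono_set Set.Ioc_subset_Icc_self
    have hDiint : IntervalIntegrable D volume 0 x :=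
      ((Set.uIcc_of_le hx0.le).symm ▸ hDcont).intervalIntegrable
    have hgiint : IntervalIntegrable g volume 0 x :=
      ((Set.uIcc_of_le hx0.le).symm ▸ hgcont).intervalIntegrable
    set G : ℝ → ℝ := fun u => (ρ * Real.arcsin (u/ρ))^k / k with hG
    have hderiv : ∀ u ∈ Set.uIcc (0:ℝ) x, HasDerivAt G (D u) u := by
      intro u hu
      rw [Set.uIcc_of_le hx0.le] at hu
      have hu1 : u/ρ < 1 := by rw [div_lt_one hρ]; linarith [hu.2]
      have hu0 : 0 ≤ u/ρ := div_nonneg hu.1 hρ.le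
      have h1 : HasDerivAt (fun u : ℝ => u/ρ) (1/ρ) u := by
        simpa using (hasDerivAt_id u).div_const ρ
      have h2 : HasDerivAt Real.arcsin (1/Real.sqrt (1-(u/ρ)^2)) (u/ρ) :=
        Real.hasDerivAt_arcsin (by linarith) (by linarith)
      have h3 := (h2.comp u h1).const_mul ρ
      have h4 := (h3.pow k).div_const (k:ℝ)
      refine h4.congr_deriv ?_
      have hss : 0 < ρ^2 - u^2 := by nlinarith [hu.1, hu.2]
      have hsn : Real.sqrt (ρ^2-u^2) ≠ 0 := by positivity
      have hs : Real.sqrt (1-(u/ρ)^2) = Real.sqrt (ρ^2-u^2) / ρ := by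
        rw [show 1-(u/ρ)^2 = (ρ^2-u^2)/ρ^2 by field_simp,
          Real.sqrt_div hss.le, Real.sqrt_sq hρ.le]
      rw [hD, hs]
      have hk' : (k:ℝ) ≠ 0 := Nat.cast_ne_zero.2 hk.ne'
      field_simp
      simp only [Function.comp_apply]
    have hptwise : ∀ u ∈ Set.Icc (0:ℝ) x, g u ≤ D u := by
      intro u hu
      apply mul_le_mul_of_nonneg_right _ (div_nonneg hρ.le (Real.sqrt_nonneg _))
      apply pow_le_pow_left₀ hu.1
      have h1 : u/ρ ≤ 1 := by rw [div_le_one hρ]; linarith [hu.2]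
      have h0' : 0 ≤ u/ρ := div_nonneg hu.1 hρ.le
      have h2 : u/ρ ≤ Real.arcsin (u/ρ) := by
        conv_lhs => rw [← Real.sin_arcsin (by linarith : -(1:ℝ) ≤ u/ρ) h1]
        exact Real.sin_le (Real.arcsin_nonneg.2 h0')
      calc u = ρ * (u/ρ) := by field_simp
        _ ≤ ρ * Real.arcsin (u/ρ) := by nlinarith [h2]
    have hint_bound : ∫ u in Set.Ioc (0:ℝ) x, g u ≤ (π/2*ρ)^k / k := by
      rw [← intervalIntegral.integral_of_le hx0.le]
      have hftc : ∫ u in (0:ℝ)..x, D u = G x - G 0 :=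
        intervalIntegral.integral_eq_sub_of_hasDerivAt hderiv hDiint
      have hmono := intervalIntegral.integral_mono_on hx0.le hgiint hDiint hptwise
      have hG0 : G 0 = 0 := by
        simp [hG, Real.arcsin_zero, zero_pow hk.ne']
      have hGx : G x ≤ (π/2*ρ)^k / k := by
        have h1 : ρ * Real.arcsin (x/ρ) ≤ π/2*ρ := by
          have := Real.arcsin_le_pi_div_two (x/ρ)
          nlinarith
        have h2 : 0 ≤ ρ * Real.arcsin (x/ρ) :=
          mul_nonneg hρ.le (Real.arcsin_nonneg.2 (div_nonneg hx0.le hρ.le))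
        rw [hG]
        exact (div_le_div_iff_of_pos_right (by exact_mod_cast hk)).2 (pow_le_pow_left₀ h2 h1 k)
      calc ∫ u in (0:ℝ)..x, g u ≤ ∫ u in (0:ℝ)..x, D u := hmono
        _ = G x - G 0 := hftc
        _ ≤ (π/2*ρ)^k / k := by rw [hG0]; linarith
    calc ∫⁻ u in Set.Ioi (0:ℝ), Fn n u
        ≤ ∫⁻ u in Set.Ioi (0:ℝ), (Set.Ioc 0 x).indicator F u := by
          apply setLIntegral_mono (hFmeas.indicator measurableSet_Ioc)
          intro u hu
          simp only [hFn]
          split_ifs with h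
          · exact (Set.indicator_of_mem (Set.mem_Ioc.2 ⟨hu, h⟩) F).symm.le
          · exact zero_le
      _ ≤ ∫⁻ u, (Set.Ioc 0 x).indicator F u := setLIntegral_le_lintegral _ _
      _ = ∫⁻ u in Set.Ioc 0 x, F u := lintegral_indicator measurableSet_Ioc _
      _ = ∫⁻ u in Set.Ioc 0 x, ENNReal.ofReal (g u) := by
          apply setLIntegral_congr_fun measurableSet_Ioc
          intro u hu
          have huρ : u < ρ := lt_of_le_of_lt hu.2 hxρ
          rw [hF, hg]
          simp only [if_pos huρ]
          rw [← ENNReal.ofReal_mul (pow_nonneg hu.1.le _)]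
      _ = ENNReal.ofReal (∫ u in Set.Ioc 0 x, g u) := by
          rw [← MeasureTheory.ofReal_integral_eq_lintegral_ofReal hgint]
          filter_upwards [ae_restrict_mem measurableSet_Ioc] with u hu
          exact mul_nonneg (pow_nonneg hu.1.le _) (div_nonneg hρ.le (Real.sqrt_nonneg _))
      _ ≤ ENNReal.ofReal ((π/2*ρ)^k / k) := ENNReal.ofReal_le_ofReal hint_bound
  calc ∫⁻ u in Set.Ioi (0:ℝ), F u = ∫⁻ u in Set.Ioi (0:ℝ), ⨆ n, Fn n u :=
        lintegral_congr fun u => (key u).symm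
    _ = ⨆ n, ∫⁻ u in Set.Ioi (0:ℝ), Fn n u := lintegral_iSup hFnmeas hFnmono
    _ ≤ ENNReal.ofReal ((π/2*ρ)^k / k) := iSup_le bound_n


lemma auxkd (k : ℕ) {ρ β : ℝ} (hρ : 0 < ρ) (hβ : 0 ≤ β) :
    ∫⁻ y : EuclideanSpace ℝ (Fin k),
      (if ‖y‖ < ρ then ENNReal.ofReal (2*β*ρ / Real.sqrt (ρ^2 - ‖y‖^2)) else 0) ∂volume
      ≤ ENNReal.ofReal
        ((volume (Metric.ball (0 : EuclideanSpace ℝ (Fin k)) 1)).toReal * (π/2*ρ)^k * (2*β)) := by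
  have hfm : Measurable (fun u : ℝ => if u < ρ then ENNReal.ofReal (ρ / Real.sqrt (ρ^2 - u^2)) else 0) :=
    Measurable.ite (measurableSet_lt measurable_id measurable_const)
      (Measurable.ennreal_ofReal (measurable_const.div (by fun_prop))) measurable_const
  have hsplit : ∀ u : ℝ, (if u < ρ then ENNReal.ofReal (2*β*ρ / Real.sqrt (ρ^2 - u^2)) else 0)
      = ENNReal.ofReal (2*β) * (if u < ρ then ENNReal.ofReal (ρ / Real.sqrt (ρ^2 - u^2)) else 0) := by
    intro u
    split_ifs with h
    · rw [← ENNReal.ofReal_mul (by linarith), mul_div_assoc]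
    · rw [mul_zero]
  rcases Nat.eq_zero_or_pos k with rfl | hk
  · rw [volume_euclideanSpace_eq_dirac, lintegral_dirac]
    have h0 : ‖(0 : EuclideanSpace ℝ (Fin 0))‖ = 0 := norm_zero
    rw [h0, if_pos hρ]
    have : (2*β*ρ) / Real.sqrt (ρ^2 - 0^2) = 2*β := by
      rw [show ρ^2 - 0^2 = ρ^2 by ring, Real.sqrt_sq hρ.le]
      field_simp
    rw [this]
    have hb : Measure.dirac (0 : EuclideanSpace ℝ (Fin 0)) (Metric.ball 0 1) = 1 := by
      rw [Measure.dirac_apply]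
      simp [Set.indicator_of_mem (mem_ball_self one_pos)]
    rw [hb]
    simp
  · haveI : Nonempty (Fin k) := ⟨⟨0, hk⟩⟩
    rw [lintegral_congr (fun y : EuclideanSpace ℝ (Fin k) => hsplit ‖y‖), lintegral_const_mul (f := fun a : EuclideanSpace ℝ (Fin k) =>
      if ‖a‖ < ρ then ENNReal.ofReal (ρ / Real.sqrt (ρ^2 - ‖a‖^2)) else 0) _
      (hfm.comp measurable_norm)]
    have hrad := lintegral_fun_norm_addHaar' (volume : Measure (EuclideanSpace ℝ (Fin k))) _ hfm
    simp only [finrank_euclideanSpace_fin] at hrad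
    rw [hrad]
    have hV : volume (Metric.ball (0 : EuclideanSpace ℝ (Fin k)) 1) ≠ ⊤ :=
      measure_ball_lt_top.ne
    set v := (volume (Metric.ball (0 : EuclideanSpace ℝ (Fin k)) 1)).toReal with hv
    have hv0 : 0 ≤ v := ENNReal.toReal_nonneg
    calc ENNReal.ofReal (2*β) * ((k : ℝ≥0∞) * volume (Metric.ball (0 : EuclideanSpace ℝ (Fin k)) 1) *
          ∫⁻ u in Set.Ioi (0:ℝ), ENNReal.ofReal (u ^ (k-1)) *
            (if u < ρ then ENNReal.ofReal (ρ / Real.sqrt (ρ^2 - u^2)) else 0))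
        ≤ ENNReal.ofReal (2*β) * ((k : ℝ≥0∞) * volume (Metric.ball (0 : EuclideanSpace ℝ (Fin k)) 1) *
          ENNReal.ofReal ((π/2*ρ)^k / k)) := by
          gcongr
          exact aux1d k hk hρ
      _ = ENNReal.ofReal (v * (π/2*ρ)^k * (2*β)) := by
          rw [← ENNReal.ofReal_toReal hV, ← hv, ← ENNReal.ofReal_natCast k,
            ← ENNReal.ofReal_mul (by positivity), ← ENNReal.ofReal_mul (by positivity),
            ← ENNReal.ofReal_mul (by linarith)]
          congr 1
          have hk' : (k:ℝ) ≠ 0 := Nat.cast_ne_zero.2 hk.ne'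
          field_simp


lemma sq_le_of_le_sqrt' {S c : ℝ} (hS : 0 ≤ S) (hc : 0 ≤ c) (h : c ≤ Real.sqrt S) : c^2 ≤ S := by
  nlinarith [Real.sq_sqrt hS, Real.sqrt_nonneg S]

lemma le_sq_of_sqrt_le {S c : ℝ} (hS : 0 ≤ S) (h : Real.sqrt S ≤ c) : S ≤ c^2 := by
  nlinarith [Real.sq_sqrt hS, Real.sqrt_nonneg S]

lemma lt_sq_of_sqrt_lt {S c : ℝ} (hS : 0 ≤ S) (h : Real.sqrt S < c) : S < c^2 := by
  nlinarith [Real.sq_sqrt hS, Real.sqrt_nonneg S]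

lemma point_bound {t d Qy R β ρ : ℝ} (hβ : 0 ≤ β) (h0 : 0 < ρ) (hρ : ρ < R - β) (hd0 : 0 ≤ d)
    (hQy : 0 ≤ Qy) (hb2 : (t-d)^2 + Qy < ρ^2) (hs1 : (R-β)^2 ≤ t^2 + Qy)
    (hs2 : t^2 + Qy ≤ (R+β)^2) :
    Qy < ρ^2 ∧ Real.sqrt ((R-β)^2 - Qy) ≤ t ∧ t ≤ Real.sqrt ((R+β)^2 - Qy) := by
  have hRβ : 0 < R - β := lt_trans h0 hρ
  have hρRβ : ρ^2 < (R-β)^2 := by nlinarith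
  have hQρ : Qy < ρ^2 := by nlinarith [sq_nonneg (t-d)]
  refine ⟨hQρ, ?_, ?_⟩
  · have hat : Real.sqrt ((R-β)^2 - Qy) ≤ |t| := by
      have h2 := Real.sqrt_le_sqrt (show (R-β)^2 - Qy ≤ t^2 by linarith)
      rwa [Real.sqrt_sq_eq_abs] at h2
    rcases le_abs.1 hat with h | h
    · exact h
    · exfalso
      have hsn := Real.sqrt_nonneg ((R-β)^2 - Qy)
      have hdt : Real.sqrt ((R-β)^2 - Qy) ≤ d - t := by linarith
      have hsq3 := Real.sq_sqrt (show (0:ℝ) ≤ (R-β)^2 - Qy by nlinarith)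
      have := mul_self_le_mul_self hsn hdt
      nlinarith
  · have h2 := Real.sqrt_le_sqrt (show t^2 ≤ (R+β)^2 - Qy by linarith)
    rw [Real.sqrt_sq_eq_abs] at h2
    exact (le_abs_self t).trans h2

/-- Forbidden volume bound: the volume of the set of points of the ball `B(p,ρ)` whose
distance to the sphere of radius `R` centred at `c` is at most `β` is bounded by
`V_{m-1}·(πρ/2)^{m-1}·2β`, where `V_{m-1}` is the volume of the `(m-1)`-dimensional unit
ball, provided `ρ < R - β`. -/
theorem shell_volume_bound (m : ℕ) (c p : EuclideanSpace ℝ (Fin m)) (R β ρ : ℝ)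
    (hβ : 0 ≤ β) (hρ : ρ < R - β) :
    volume (Metric.ball p ρ ∩
        {x : EuclideanSpace ℝ (Fin m) | R - β ≤ dist x c ∧ dist x c ≤ R + β}) ≤
      ENNReal.ofReal
        ((volume (Metric.ball (0 : EuclideanSpace ℝ (Fin (m - 1))) 1)).toReal *
          (π / 2 * ρ) ^ (m - 1) * (2 * β)) := by
  rcases le_or_gt ρ 0 with h0 | h0
  · rw [Metric.ball_eq_empty.2 h0, Set.empty_inter, measure_empty]
    exact zero_le
  rcases Nat.eq_zero_or_pos m with rfl | hm
  · have hempty : Metric.ball p ρ ∩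
        {x : EuclideanSpace ℝ (Fin 0) | R - β ≤ dist x c ∧ dist x c ≤ R + β} = ∅ := by
      rw [Set.eq_empty_iff_forall_notMem]
      rintro x ⟨-, h1, -⟩
      have hxc : dist x c = 0 := by rw [Subsingleton.elim x c, dist_self]
      rw [hxc] at h1
      linarith
    rw [hempty, measure_empty]
    exact zero_le
  obtain ⟨k, rfl⟩ := Nat.exists_eq_succ_of_ne_zero hm.ne'
  simp only [Nat.succ_eq_add_one, Nat.add_sub_cancel]
  have hRβ : 0 < R - β := lt_trans h0 hρ
  set shell : Set (EuclideanSpace ℝ (Fin (k+1))) :=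
    {x : EuclideanSpace ℝ (Fin (k+1)) | R - β ≤ ‖x‖ ∧ ‖x‖ ≤ R + β} with hshell
  have hshellm : MeasurableSet shell := by
    have h : shell = (fun x : EuclideanSpace ℝ (Fin (k+1)) => ‖x‖) ⁻¹' (Set.Icc (R-β) (R+β)) := rfl
    rw [h]
    exact measurable_norm measurableSet_Icc
  set v : EuclideanSpace ℝ (Fin (k+1)) := p - c with hv
  set d : ℝ := ‖v‖ with hd
  have hd0 : 0 ≤ d := norm_nonneg _
  set w : EuclideanSpace ℝ (Fin (k+1)) := d • EuclideanSpace.single (0 : Fin (k+1)) (1:ℝ) with hw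
  have hwnorm : ‖w‖ = d := by
    rw [hw, norm_smul, EuclideanSpace.norm_single]
    simp [abs_of_nonneg hd0]
  set A₂ : Set (EuclideanSpace ℝ (Fin (k+1))) := Metric.ball w ρ ∩ shell with hA₂
  have hA₂m : MeasurableSet A₂ := measurableSet_ball.inter hshellm
  -- Step 1: translation + reflection
  have step1 : volume (Metric.ball p ρ ∩
      {x : EuclideanSpace ℝ (Fin (k+1)) | R - β ≤ dist x c ∧ dist x c ≤ R + β}) = volume A₂ := by
    have hdistm : MeasurableSet
        {x : EuclideanSpace ℝ (Fin (k+1)) | R - β ≤ dist x c ∧ dist x c ≤ R + β} := by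
      have h : {x : EuclideanSpace ℝ (Fin (k+1)) | R - β ≤ dist x c ∧ dist x c ≤ R + β}
          = (fun x : EuclideanSpace ℝ (Fin (k+1)) => dist x c) ⁻¹' (Set.Icc (R-β) (R+β)) := rfl
      rw [h]
      exact (Continuous.measurable (by fun_prop)) measurableSet_Icc
    have e1 : (fun x : EuclideanSpace ℝ (Fin (k+1)) => x + c) ⁻¹'
        (Metric.ball p ρ ∩ {x | R - β ≤ dist x c ∧ dist x c ≤ R + β})
        = Metric.ball v ρ ∩ shell := by
      ext x
      simp only [Set.mem_preimage, Set.mem_inter_iff, Metric.mem_ball, Set.mem_setOf_eq, hshell]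
      have h1 : dist (x + c) p = dist x v := by
        rw [dist_eq_norm, dist_eq_norm, hv]
        congr 1
        abel
      have h2 : dist (x + c) c = ‖x‖ := by
        rw [dist_eq_norm]
        congr 1
        abel
      rw [h1, h2]
    have e2 : volume (Metric.ball p ρ ∩ {x | R - β ≤ dist x c ∧ dist x c ≤ R + β})
        = volume (Metric.ball v ρ ∩ shell) := by
      rw [← e1]
      exact ((measurePreserving_add_right volume c).measure_preimage
        (measurableSet_ball.inter hdistm).nullMeasurableSet).symm
    set refl := Submodule.reflection (ℝ ∙ (v - w))ᗮ with hrefldef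
    have hrefl : refl v = w := Submodule.reflection_sub hwnorm.symm
    have e3 : (⇑refl) ⁻¹' A₂ = Metric.ball v ρ ∩ shell := by
      ext x
      simp only [Set.mem_preimage, hA₂, Set.mem_inter_iff, Metric.mem_ball, hshell,
        Set.mem_setOf_eq]
      have hd1 : dist (refl x) w = dist x v := by
        rw [← hrefl]
        exact refl.dist_map x v
      have hn1 : ‖refl x‖ = ‖x‖ := refl.norm_map x
      rw [hd1, hn1]
    have e4 : volume (Metric.ball v ρ ∩ shell) = volume A₂ := by
      rw [← e3]
      exact refl.measurePreserving.measure_preimage hA₂m.nullMeasurableSet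
    rw [e2, e4]
  -- Step 2: coordinates
  set φ := (MeasurableEquiv.toLp 2 (Fin (k+1) → ℝ)).symm with hφ
  set ψ := MeasurableEquiv.piFinSuccAbove (fun _ : Fin (k+1) => ℝ) 0 with hψ
  have hS1m : MeasurableSet (⇑φ.symm ⁻¹' A₂) := φ.symm.measurable hA₂m
  have step2 : volume A₂ = volume (⇑ψ.symm ⁻¹' (⇑φ.symm ⁻¹' A₂)) := by
    calc volume A₂ = volume (⇑φ.symm ⁻¹' A₂) :=
          (((EuclideanSpace.volume_preserving_symm_measurableEquiv_toLp (Fin (k+1))).symm).measure_preimage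
            hA₂m.nullMeasurableSet).symm
      _ = volume (⇑ψ.symm ⁻¹' (⇑φ.symm ⁻¹' A₂)) :=
          (((volume_preserving_piFinSuccAbove (fun _ : Fin (k+1) => ℝ) 0).symm).measure_preimage
            hS1m.nullMeasurableSet).symm
  set Q : (Fin k → ℝ) → ℝ := fun y => ∑ j, (y j)^2 with hQ
  have hQ0 : ∀ y, 0 ≤ Q y := fun y => Finset.sum_nonneg fun j _ => sq_nonneg _
  have hQm : Measurable Q := by fun_prop
  set T : Set (ℝ × (Fin k → ℝ)) := {z | Q z.2 < ρ^2 ∧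
      Real.sqrt ((R-β)^2 - Q z.2) ≤ z.1 ∧ z.1 ≤ Real.sqrt ((R+β)^2 - Q z.2)} with hT
  have hTm : MeasurableSet T := by
    have h : T = {z : ℝ × (Fin k → ℝ) | Q z.2 < ρ^2} ∩
        ({z : ℝ × (Fin k → ℝ) | Real.sqrt ((R-β)^2 - Q z.2) ≤ z.1} ∩
         {z : ℝ × (Fin k → ℝ) | z.1 ≤ Real.sqrt ((R+β)^2 - Q z.2)}) := by
      ext z; simp [hT, and_assoc]
    rw [h]
    refine (measurableSet_lt (hQm.comp measurable_snd) measurable_const).inter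
      ((measurableSet_le (Real.continuous_sqrt.measurable.comp
        (measurable_const.sub (hQm.comp measurable_snd))) measurable_fst).inter
       (measurableSet_le measurable_fst (Real.continuous_sqrt.measurable.comp
        (measurable_const.sub (hQm.comp measurable_snd)))))
  -- containment
  have hsub : ⇑ψ.symm ⁻¹' (⇑φ.symm ⁻¹' A₂) ⊆ T := by
    rintro ⟨t, y⟩ hz
    have hx : φ.symm (ψ.symm (t, y)) ∈ A₂ := hz
    set x : EuclideanSpace ℝ (Fin (k+1)) := φ.symm (ψ.symm (t, y)) with hxdef
    have hx0 : x 0 = t := by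
      simp [hxdef, hφ, hψ]
    have hxs : ∀ j : Fin k, x ((0 : Fin (k+1)).succAbove j) = y j := by
      intro j
      simp [hxdef, hφ, hψ]
    have hw0 : w 0 = d := by
      simp [hw, EuclideanSpace.single_apply]
    have hws : ∀ j : Fin k, w ((0 : Fin (k+1)).succAbove j) = 0 := by
      intro j
      have hne : (0 : Fin (k+1)).succAbove j ≠ 0 := Fin.succAbove_ne _ j
      simp [hw, EuclideanSpace.single_apply, Fin.succ_ne_zero j, hne]
    have hxnorm : ‖x‖ = Real.sqrt (t^2 + Q y) := by
      rw [EuclideanSpace.norm_eq]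
      have hsum : ∑ i, ‖x i‖^2 = t^2 + Q y := by
        calc ∑ i, ‖x i‖^2 = ‖x 0‖^2 + ∑ j, ‖x (Fin.succAbove 0 j)‖^2 :=
              Fin.sum_univ_succAbove (fun i => ‖x i‖^2) 0
          _ = t^2 + Q y := by
              rw [Real.norm_eq_abs, sq_abs, hx0]
              congr 1
              exact Finset.sum_congr rfl fun j _ => by
                rw [Real.norm_eq_abs, sq_abs, hxs j]
      rw [hsum]
    have hdistw : dist x w = Real.sqrt ((t-d)^2 + Q y) := by
      rw [EuclideanSpace.dist_eq]
      have hsum : ∑ i, dist (x i) (w i)^2 = (t-d)^2 + Q y := by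
        calc ∑ i, dist (x i) (w i)^2
            = dist (x 0) (w 0)^2 + ∑ j, dist (x (Fin.succAbove 0 j)) (w (Fin.succAbove 0 j))^2 :=
              Fin.sum_univ_succAbove (fun i => dist (x i) (w i)^2) 0
          _ = (t-d)^2 + Q y := by
              rw [Real.dist_eq, sq_abs, hx0, hw0]
              congr 1
              exact Finset.sum_congr rfl fun j _ => by
                rw [Real.dist_eq, sq_abs, hxs j, hws j, sub_zero]
      rw [hsum]
    obtain ⟨hb, hs⟩ := hx
    rw [Metric.mem_ball, hdistw] at hb
    simp only [hshell, Set.mem_setOf_eq, hxnorm] at hs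
    obtain ⟨hs1, hs2⟩ := hs
    have hQy := hQ0 y
    have hSnn : (0:ℝ) ≤ t^2 + Q y := by positivity
    have hSnn' : (0:ℝ) ≤ (t-d)^2 + Q y := by positivity
    have hb2 : (t-d)^2 + Q y < ρ^2 := lt_sq_of_sqrt_lt hSnn' hb
    have hs1' : (R-β)^2 ≤ t^2 + Q y := sq_le_of_le_sqrt' hSnn hRβ.le hs1
    have hs2' : t^2 + Q y ≤ (R+β)^2 := le_sq_of_sqrt_le hSnn hs2
    exact point_bound hβ h0 hρ hd0 hQy hb2 hs1' hs2'
  have step3 : volume (⇑ψ.symm ⁻¹' (⇑φ.symm ⁻¹' A₂)) ≤ volume T := measure_mono hsub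
  have step4 : volume T ≤ ∫⁻ y : (Fin k → ℝ),
      (if Real.sqrt (Q y) < ρ then
        ENNReal.ofReal (2*β*ρ / Real.sqrt (ρ^2 - Real.sqrt (Q y)^2)) else 0) ∂volume := by
    rw [Measure.volume_eq_prod, Measure.prod_apply_symm hTm]
    apply lintegral_mono
    intro y
    dsimp only
    have hpre : (fun x : ℝ => (x, y)) ⁻¹' T = (if Q y < ρ^2 then
        Set.Icc (Real.sqrt ((R-β)^2 - Q y)) (Real.sqrt ((R+β)^2 - Q y)) else (∅ : Set ℝ)) := by
      split_ifs with h
      · ext t; simp [hT, h, Set.mem_Icc]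
      · ext t; simp [hT, h]
    by_cases h : Q y < ρ^2
    · rw [hpre, if_pos h, Real.volume_Icc]
      have h1 : Real.sqrt (Q y) < ρ := by
        have h2 := Real.sqrt_lt_sqrt (hQ0 y) h
        rwa [Real.sqrt_sq h0.le] at h2
      rw [if_pos h1, Real.sq_sqrt (hQ0 y)]
      apply ENNReal.ofReal_le_ofReal
      have hsb := slice_bound (r := R - β) hβ h0 hρ (hQ0 y) h
      rw [show R - β + 2*β = R + β by ring] at hsb
      exact hsb
    · rw [hpre, if_neg h]
      simp
  have hgm : Measurable (fun y : Fin k → ℝ => (if Real.sqrt (Q y) < ρ then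
      ENNReal.ofReal (2*β*ρ / Real.sqrt (ρ^2 - Real.sqrt (Q y)^2)) else 0)) := by
    apply Measurable.ite
    · exact measurableSet_lt (Real.continuous_sqrt.measurable.comp hQm) measurable_const
    · apply Measurable.ennreal_ofReal
      apply measurable_const.div
      exact Real.continuous_sqrt.measurable.comp
        (measurable_const.sub (((Real.continuous_sqrt.measurable.comp hQm).pow_const 2)))
    · exact measurable_const
  have step5 : ∫⁻ y : (Fin k → ℝ),
      (if Real.sqrt (Q y) < ρ then
        ENNReal.ofReal (2*β*ρ / Real.sqrt (ρ^2 - Real.sqrt (Q y)^2)) else 0) ∂volume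
      = ∫⁻ y : EuclideanSpace ℝ (Fin k),
        (if ‖y‖ < ρ then ENNReal.ofReal (2*β*ρ / Real.sqrt (ρ^2 - ‖y‖^2)) else 0) ∂volume := by
    rw [← (EuclideanSpace.volume_preserving_symm_measurableEquiv_toLp (Fin k)).lintegral_comp hgm]
    apply lintegral_congr
    intro z
    have hnorm : Real.sqrt (Q ((MeasurableEquiv.toLp 2 (Fin k → ℝ)).symm z)) = ‖z‖ := by
      rw [EuclideanSpace.norm_eq]
      congr 1
      refine Finset.sum_congr rfl fun j _ => ?_
      rw [Real.norm_eq_abs, sq_abs]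
      rfl
    rw [hnorm]
  calc volume (Metric.ball p ρ ∩ {x | R - β ≤ dist x c ∧ dist x c ≤ R + β})
      = volume A₂ := step1
    _ = volume (⇑ψ.symm ⁻¹' (⇑φ.symm ⁻¹' A₂)) := step2
    _ ≤ volume T := step3
    _ ≤ _ := step4
    _ = _ := step5
    _ ≤ _ := auxkd k h0 hβ
end
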